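/- arXiv:2501.07057 — 2 statements merged into one kernel-verified Lean document; each statement's English description precedes it below -/
import Mathlib

section
/- Let Y and Z be independent nonnegative random variables with continuous CDFs F_Y, F_Z. If Y stochastically dominates Z in the first degree, i.e., F_Y(a) ≥ F_Z(a) for all a ≥ 0 with strict inequality at some point a₀ (and hence, by continuity, on an interval around a₀ charged by the law of Z), then P(Y < Z) > 1/2. -/
open MeasureTheory ProbabilityTheory Set
open scoped ENNReal

/-!
Let `ν` be the law of `Z`. By independence and continuity of `F_Y`, `P(Y < Z) = ∫ F_Y dν`.
Since `F_Z ≤ F_Y` on the support of `ν`, with strict inequality on a set of positive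
`ν`-measure, this strictly exceeds `∫ F_Z dν = P(Z' ≤ Z)` for an independent copy `Z'` of `Z`,
which is at least `1/2` because `{Z' ≤ Z}` and its mirror image `{Z ≤ Z'}` cover the whole
space and have the same probability.
-/

section LinearOrder

variable {α : Type*} [LinearOrder α] [MeasurableSpace α] [TopologicalSpace α]
  [OrderClosedTopology α] [SecondCountableTopology α]

theorem one_half_le_lintegral_measure_Iic [OpensMeasurableSpace α] (ν : Measure α)
    [IsProbabilityMeasure ν] :
    1 / 2 ≤ ∫⁻ z, ν (Iic z) ∂ν := by
  set A : Set (α × α) := {p | p.1 ≤ p.2}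
  have hA : MeasurableSet A := measurableSet_le measurable_fst measurable_snd
  have h_diag : (ν.prod ν) A = ∫⁻ z, ν (Iic z) ∂ν := Measure.prod_apply_symm hA
  have h_swap : (ν.prod ν) (Prod.swap ⁻¹' A) = (ν.prod ν) A := by
    rw [← Measure.map_apply measurable_swap hA, Measure.prod_swap]
  have h_cover : univ ⊆ A ∪ Prod.swap ⁻¹' A := fun p _ => le_total p.1 p.2
  refine ENNReal.div_le_of_le_mul ?_
  calc (1 : ℝ≥0∞) = (ν.prod ν) univ := by simp
    _ ≤ (ν.prod ν) A + (ν.prod ν) (Prod.swap ⁻¹' A) :=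
        (measure_mono h_cover).trans (measure_union_le _ _)
    _ = (∫⁻ z, ν (Iic z) ∂ν) * 2 := by rw [h_swap, h_diag, mul_two]

namespace ProbabilityTheory.IndepFun

variable {Ω : Type*} [MeasurableSpace Ω] {μ : Measure Ω} {X Y : Ω → α}

theorem measure_lt_eq_lintegral [OpensMeasurableSpace α] [IsFiniteMeasure μ] (hX : Measurable X)
    (hY : Measurable Y) (hXY : IndepFun X Y μ) :
    μ {ω | X ω < Y ω} = ∫⁻ y, μ.map X (Iio y) ∂μ.map Y := by
  have hlt : MeasurableSet {p : α × α | p.1 < p.2} :=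
    measurableSet_lt measurable_fst measurable_snd
  calc μ {ω | X ω < Y ω} = μ.map (fun ω => (X ω, Y ω)) {p | p.1 < p.2} := by
        rw [Measure.map_apply (hX.prodMk hY) hlt]; rfl
    _ = ((μ.map X).prod (μ.map Y)) {p | p.1 < p.2} := by
        rw [(indepFun_iff_map_prod_eq_prod_map_map hX.aemeasurable hY.aemeasurable).1 hXY]
    _ = ∫⁻ y, μ.map X (Iio y) ∂μ.map Y := Measure.prod_apply_symm hlt

theorem one_half_lt_measure_lt [BorelSpace α] [IsProbabilityMeasure μ] (hX : Measurable X)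
    (hY : Measurable Y) (hXY : IndepFun X Y μ) [NullSingletonClass (μ.map X)]
    (h_le : ∀ᵐ z ∂μ.map Y, μ.map Y (Iic z) ≤ μ.map X (Iic z))
    (h_ne : ∃ᵐ z ∂μ.map Y, μ.map Y (Iic z) ≠ μ.map X (Iic z)) :
    1 / 2 < μ {ω | X ω < Y ω} := by
  have : IsProbabilityMeasure (μ.map Y) := Measure.isProbabilityMeasure_map hY.aemeasurable
  have hX_mono : Monotone fun z => μ.map X (Iic z) := fun _ _ h =>
    measure_mono (Iic_subset_Iic.2 h)
  have h_fin : ∫⁻ z, μ.map Y (Iic z) ∂μ.map Y ≠ ∞ :=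
    ((lintegral_mono fun _ => prob_le_one).trans_lt (by simp)).ne
  calc 1 / 2 ≤ ∫⁻ z, μ.map Y (Iic z) ∂μ.map Y := one_half_le_lintegral_measure_Iic _
    _ < ∫⁻ z, μ.map X (Iic z) ∂μ.map Y := lintegral_strict_mono_of_ae_le_of_frequently_ae_lt
        hX_mono.measurable.aemeasurable h_fin h_le h_ne
    _ = μ {ω | X ω < Y ω} := by
        rw [hXY.measure_lt_eq_lintegral hX hY]
        exact lintegral_congr fun z => measure_congr (Iio_ae_eq_Iic' (measure_singleton z)).symm

end ProbabilityTheory.IndepFun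

end LinearOrder

theorem ProbabilityTheory.nullSingletonClass_of_continuous_cdf (κ : Measure ℝ)
    [IsProbabilityMeasure κ] (h : Continuous (cdf κ)) : NullSingletonClass κ where
  measure_singleton a := by
    rw [← measure_cdf κ, StieltjesFunction.measure_singleton,
      h.continuousAt.continuousWithinAt.leftLim_eq, sub_self, ENNReal.ofReal_zero]

theorem stmt2_general {Ω : Type*} [MeasurableSpace Ω] (μ : Measure Ω) [IsProbabilityMeasure μ]
    (Y Z : Ω → ℝ) (hYm : Measurable Y) (hZm : Measurable Z)
    (hZnn : ∀ ω, 0 ≤ Z ω)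
    (hind : IndepFun Y Z μ)
    (FY FZ : ℝ → ℝ)
    (hFY : ∀ a, FY a = (μ {ω | Y ω ≤ a}).toReal)
    (hFZ : ∀ a, FZ a = (μ {ω | Z ω ≤ a}).toReal)
    (hFYc : Continuous FY)
    (hdom : ∀ a, 0 ≤ a → FZ a ≤ FY a)
    (hcharge : 0 < μ {ω | FZ (Z ω) < FY (Z ω)}) :
    1 / 2 < (μ {ω | Y ω < Z ω}).toReal := by
  set κ := μ.map Y
  set ν := μ.map Z
  have : IsProbabilityMeasure κ := Measure.isProbabilityMeasure_map hYm.aemeasurable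
  have hκ : ∀ a, (κ (Iic a)).toReal = FY a := fun a => by
    rw [hFY, Measure.map_apply hYm measurableSet_Iic]; rfl
  have hν : ∀ a, (ν (Iic a)).toReal = FZ a := fun a => by
    rw [hFZ, Measure.map_apply hZm measurableSet_Iic]; rfl
  have : NullSingletonClass κ := nullSingletonClass_of_continuous_cdf κ <| by
    rwa [show cdf κ = FY from funext fun a => by rw [cdf_eq_real, measureReal_def, hκ]]
  have h_le : ∀ᵐ z ∂ν, ν (Iic z) ≤ κ (Iic z) := by
    filter_upwards [(ae_map_iff hZm.aemeasurable measurableSet_Ici).2 (ae_of_all _ hZnn)]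
      with z hz
    rw [← ENNReal.toReal_le_toReal (measure_ne_top _ _) (measure_ne_top _ _), hκ, hν]
    exact hdom z hz
  have h_ne : ∃ᵐ z ∂ν, ν (Iic z) ≠ κ (Iic z) :=
    ((Measure.tendsto_ae_map hZm.aemeasurable).frequently (p := fun z => FZ z < FY z)
      (frequently_ae_iff.2 hcharge.ne')).mono
        fun z hz heq => hz.ne (by rw [← hκ, ← hν, heq])
  simpa using ENNReal.toReal_strict_mono (measure_ne_top μ _)
    (hind.one_half_lt_measure_lt hYm hZm h_le h_ne)

theorem stmt2 {Ω : Type*} [MeasurableSpace Ω] (μ : Measure Ω) [IsProbabilityMeasure μ]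
    (Y Z : Ω → ℝ) (hYm : Measurable Y) (hZm : Measurable Z)
    (hYnn : ∀ ω, 0 ≤ Y ω) (hZnn : ∀ ω, 0 ≤ Z ω)
    (hind : IndepFun Y Z μ)
    (FY FZ : ℝ → ℝ)
    (hFY : ∀ a, FY a = (μ {ω | Y ω ≤ a}).toReal)
    (hFZ : ∀ a, FZ a = (μ {ω | Z ω ≤ a}).toReal)
    (hFYc : Continuous FY) (hFZc : Continuous FZ)
    (hdom : ∀ a, 0 ≤ a → FZ a ≤ FY a)
    (hstrict : ∃ a₀, 0 ≤ a₀ ∧ FZ a₀ < FY a₀)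
    (hcharge : 0 < μ {ω | FZ (Z ω) < FY (Z ω)}) :
    1 / 2 < (μ {ω | Y ω < Z ω}).toReal :=
  stmt2_general μ Y Z hYm hZm hZnn hind FY FZ hFY hFZ hFYc hdom hcharge
end

section
/- Under the exponential error trust update with rate η > 0, if the per-event losses ‖Δξ^{(i)}_h‖ are independent over time, bounded in [0, L_max], and there exists ζ > 0 such that E[‖Δξ^{(i)}_{h_Y}‖] + ζ ≤ E[‖Δξ^{(i)}_h‖] for all events i and all h ≠ h_Y, then the normalized trust t^{(i)}_{h_Y} converges to 1 almost surely as i → ∞. -/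
/-!
For `h ≠ hY` the gaps `L n h - L n hY` are independent, bounded, and have mean at least `ζ`.
By Hoeffding's inequality the probability that their centred partial sum up to `i` deviates by
`i ζ / 2` is at most `exp (-c i)`; this is summable, so by Borel–Cantelli the cumulative gap is
almost surely eventually at least `i ζ / 2`, hence tends to `+∞`. Dividing numerator and
denominator by `exp (-η S_hY)`, the trust of `hY` is `t0 hY / ∑ k, t0 k * exp (-η (S_k - S_hY))`,
and the denominator tends to `t0 hY`.
-/

open MeasureTheory ProbabilityTheory Filter Finset Real

namespace ProbabilityTheory.HasSubgaussianMGF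

variable {Ω : Type*} {mΩ : MeasurableSpace Ω} {μ : Measure Ω} {X : Ω → ℝ}

lemma mono {c c' : NNReal} (h : HasSubgaussianMGF X c μ) (hc : c ≤ c') :
    HasSubgaussianMGF X c' μ where
  integrable_exp_mul := h.integrable_exp_mul
  mgf_le t := (h.mgf_le t).trans (exp_le_exp.mpr (by gcongr))

end ProbabilityTheory.HasSubgaussianMGF

section

variable {α : Type*} {mα : MeasurableSpace α} {μ : Measure α} [IsFiniteMeasure μ]

theorem ae_eventually_notMem_of_summable_measureReal {s : ℕ → Set α}
    (hs : Summable fun i => μ.real (s i)) : ∀ᵐ x ∂μ, ∀ᶠ n in atTop, x ∉ s n := by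
  refine ae_eventually_notMem ?_
  rw [tsum_congr fun i => (ofReal_measureReal (measure_ne_top μ (s i))).symm,
    ← ENNReal.ofReal_tsum_of_nonneg (fun _ => measureReal_nonneg) hs]
  exact ENNReal.ofReal_ne_top

end

section

variable {Ω : Type*} {mΩ : MeasurableSpace Ω} {μ : Measure Ω}

theorem ae_eventually_sum_range_lt_of_iIndepFun {X : ℕ → Ω → ℝ} (hind : iIndepFun X μ)
    {c : NNReal} (hX : ∀ n, HasSubgaussianMGF (X n) c μ) {ε : ℝ} (hε : 0 < ε) :
    ∀ᵐ ω ∂μ, ∀ᶠ i in atTop, ∑ n ∈ range i, X n ω < i * ε := by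
  have : IsProbabilityMeasure μ := hind.isProbabilityMeasure
  -- Hoeffding's bound `exp (-ε² / (2 * n * c))` degenerates to `1` when `c = 0`.
  have hX' : ∀ n, HasSubgaussianMGF (X n) (c + 1) μ := fun n => (hX n).mono le_self_add
  have htail : ∀ i : ℕ, μ.real {ω | i * ε ≤ ∑ n ∈ range i, X n ω}
      ≤ exp (i * (-ε ^ 2 / (2 * (c + 1 : NNReal)))) := by
    intro i
    refine (HasSubgaussianMGF.measure_sum_range_ge_le_of_iIndepFun hind (fun n _ => hX' n)
      (by positivity)).trans (le_of_eq (congrArg exp ?_))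
    rcases i.eq_zero_or_pos with rfl | hi
    · simp
    · field_simp
  have hrate : -ε ^ 2 / (2 * (c + 1 : NNReal)) < 0 :=
    div_neg_of_neg_of_pos (neg_neg_of_pos (by positivity)) (by positivity)
  have hsum := (summable_exp_nat_mul_iff.mpr hrate).of_nonneg_of_le
    (fun _ => measureReal_nonneg) htail
  filter_upwards [ae_eventually_notMem_of_summable_measureReal hsum] with ω hω
  filter_upwards [hω] with i hi
  simpa using hi

theorem ae_tendsto_sum_range_atTop_of_iIndepFun [IsProbabilityMeasure μ] {X : ℕ → Ω → ℝ}
    (hind : iIndepFun X μ) (hmeas : ∀ n, AEMeasurable (X n) μ) {a b : ℝ}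
    (hbd : ∀ n, ∀ᵐ ω ∂μ, X n ω ∈ Set.Icc a b) {ζ : ℝ} (hζ : 0 < ζ) (hmean : ∀ n, ζ ≤ μ[X n]) :
    ∀ᵐ ω ∂μ, Tendsto (fun i => ∑ n ∈ range i, X n ω) atTop atTop := by
  have hind' := hind.comp (fun n y => -(y - μ[X n])) fun _ => by fun_prop
  have hdev := ae_eventually_sum_range_lt_of_iIndepFun hind'
    (fun n => (hasSubgaussianMGF_of_mem_Icc (hmeas n) (hbd n)).neg) (half_pos hζ)
  filter_upwards [hdev] with ω hω
  refine tendsto_atTop_mono' atTop ?_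
    ((tendsto_natCast_atTop_atTop (R := ℝ)).atTop_mul_const (half_pos hζ))
  filter_upwards [hω] with i hi
  have hsum_mean : (i : ℝ) * ζ ≤ ∑ n ∈ range i, μ[X n] := by
    simpa [mul_comm] using sum_le_sum fun n (_ : n ∈ range i) => hmean n
  simp only [Function.comp_apply, neg_sub, sum_sub_distrib] at hi
  linarith

theorem ae_tendsto_sum_range_sub_atTop_of_iIndepFun [IsProbabilityMeasure μ] {ι : Type*}
    {L : ℕ → ι → Ω → ℝ} (hmeas : ∀ n k, Measurable (L n k)) {a b : ℝ}
    (hbd : ∀ n k ω, L n k ω ∈ Set.Icc a b) (hind : iIndepFun (fun n ω k => L n k ω) μ)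
    {j k : ι} {ζ : ℝ} (hζ : 0 < ζ) (hmean : ∀ n, μ[L n j] + ζ ≤ μ[L n k]) :
    ∀ᵐ ω ∂μ, Tendsto (fun i => ∑ n ∈ range i, L n k ω - ∑ n ∈ range i, L n j ω) atTop atTop := by
  have hind' : iIndepFun (fun n ω => L n k ω - L n j ω) μ :=
    hind.comp (fun _ v => v k - v j) fun _ => by fun_prop
  have hint : ∀ n k, Integrable (L n k) μ := fun n k =>
    Integrable.of_mem_Icc a b (hmeas n k).aemeasurable (ae_of_all _ (hbd n k))
  have hgap_bd : ∀ n, ∀ᵐ ω ∂μ, L n k ω - L n j ω ∈ Set.Icc (a - b) (b - a) := fun n =>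
    ae_of_all _ fun ω => by
      obtain ⟨hk₁, hk₂⟩ := hbd n k ω
      obtain ⟨hj₁, hj₂⟩ := hbd n j ω
      exact ⟨by linarith, by linarith⟩
  have hgap_mean : ∀ n, ζ ≤ ∫ ω, L n k ω - L n j ω ∂μ := fun n => by
    rw [integral_sub (hint n k) (hint n j)]
    linarith [hmean n]
  simpa only [sum_sub_distrib] using ae_tendsto_sum_range_atTop_of_iIndepFun hind'
    (fun n => ((hmeas n k).sub (hmeas n j)).aemeasurable) hgap_bd hζ hgap_mean

end

theorem tendsto_mul_exp_div_sum_of_tendsto_sub_atTop {α ι : Type*} [Fintype ι] {l : Filter α}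
    {w : ι → ℝ} {j : ι} (hw : w j ≠ 0) {η : ℝ} (hη : 0 < η) {S : ι → α → ℝ}
    (hS : ∀ k ≠ j, Tendsto (fun x => S k x - S j x) l atTop) :
    Tendsto (fun x => w j * exp (-η * S j x) / ∑ k, w k * exp (-η * S k x)) l (nhds 1) := by
  classical
  have hratio : ∀ x, w j * exp (-η * S j x) / ∑ k, w k * exp (-η * S k x) =
      w j / ∑ k, w k * exp (-η * (S k x - S j x)) := by
    intro x
    have hden : ∑ k, w k * exp (-η * S k x) =
        (∑ k, w k * exp (-η * (S k x - S j x))) * exp (-η * S j x) := by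
      rw [sum_mul]
      refine sum_congr rfl fun k _ => ?_
      rw [mul_assoc, ← exp_add]
      ring_nf
    rw [hden, mul_div_mul_right _ _ (exp_ne_zero _)]
  have hterm : ∀ k, Tendsto (fun x => w k * exp (-η * (S k x - S j x))) l
      (nhds (if k = j then w j else 0)) := by
    intro k
    by_cases hk : k = j
    · subst hk; simpa using tendsto_const_nhds
    · simpa [hk] using ((tendsto_exp_atBot.comp
        ((hS k hk).const_mul_atTop_of_neg (neg_neg_of_pos hη))).const_mul (w k))
  have hden := tendsto_finsetSum univ fun k _ => hterm k
  rw [sum_ite_eq' univ j, if_pos (mem_univ j)] at hden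
  simp only [hratio]
  rw [← div_self hw]
  exact tendsto_const_nhds.div hden hw

theorem stmt13_general {Ω : Type*} [MeasurableSpace Ω] (μ : Measure Ω) [IsProbabilityMeasure μ]
    (H : ℕ) (hY : Fin H) (η ζ Lmax : ℝ) (hη : 0 < η) (hζ : 0 < ζ)
    (L : ℕ → Fin H → Ω → ℝ)
    (hmeas : ∀ i h, Measurable (L i h))
    (hbd : ∀ i h ω, L i h ω ∈ Set.Icc (0:ℝ) Lmax)
    (hindep : iIndepFun (m := fun _ : ℕ => (inferInstance : MeasurableSpace (Fin H → ℝ)))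
      (fun i => fun ω => (fun h => L i h ω)) μ)
    (hmean : ∀ i h, h ≠ hY → (∫ ω, L i hY ω ∂μ) + ζ ≤ ∫ ω, L i h ω ∂μ)
    (t0 : Fin H → ℝ) (h0pos : ∀ h, 0 < t0 h)
    (t : ℕ → Fin H → Ω → ℝ)
    (ht : ∀ i h ω, t i h ω =
      t0 h * Real.exp (-η * ∑ n ∈ Finset.range i, L n h ω) /
        ∑ k, t0 k * Real.exp (-η * ∑ n ∈ Finset.range i, L n k ω)) :
    ∀ᵐ ω ∂μ, Filter.Tendsto (fun i => t i hY ω) Filter.atTop (nhds 1) := by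
  have hgap : ∀ᵐ ω ∂μ, ∀ h ≠ hY, Tendsto
      (fun i => ∑ n ∈ range i, L n h ω - ∑ n ∈ range i, L n hY ω) atTop atTop := by
    refine ae_all_iff.2 fun h => ?_
    by_cases hh : h = hY
    · exact ae_of_all _ fun _ hne => absurd hh hne
    filter_upwards [ae_tendsto_sum_range_sub_atTop_of_iIndepFun hmeas hbd hindep hζ
      (fun n => hmean n h hh)] with ω hω _ using hω
  filter_upwards [hgap] with ω hω
  simp only [ht]
  exact tendsto_mul_exp_div_sum_of_tendsto_sub_atTop (h0pos hY).ne' hη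
    (S := fun k i => ∑ n ∈ range i, L n k ω) hω

theorem stmt13 {Ω : Type*} [MeasurableSpace Ω] (μ : Measure Ω) [IsProbabilityMeasure μ]
    (H : ℕ) (hY : Fin H) (η ζ Lmax : ℝ) (hη : 0 < η) (hζ : 0 < ζ) (hLmax : 0 < Lmax)
    (L : ℕ → Fin H → Ω → ℝ)
    (hmeas : ∀ i h, Measurable (L i h))
    (hbd : ∀ i h ω, L i h ω ∈ Set.Icc (0:ℝ) Lmax)
    (hindep : iIndepFun (m := fun _ : ℕ => (inferInstance : MeasurableSpace (Fin H → ℝ)))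
      (fun i => fun ω => (fun h => L i h ω)) μ)
    (hmean : ∀ i h, h ≠ hY → (∫ ω, L i hY ω ∂μ) + ζ ≤ ∫ ω, L i h ω ∂μ)
    (t0 : Fin H → ℝ) (h0pos : ∀ h, 0 < t0 h) (h0sum : ∑ h, t0 h = 1)
    (t : ℕ → Fin H → Ω → ℝ)
    (ht : ∀ i h ω, t i h ω =
      t0 h * Real.exp (-η * ∑ n ∈ Finset.range i, L n h ω) /
        ∑ k, t0 k * Real.exp (-η * ∑ n ∈ Finset.range i, L n k ω)) :
    ∀ᵐ ω ∂μ, Filter.Tendsto (fun i => t i hY ω) Filter.atTop (nhds 1) :=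
  stmt13_general μ H hY η ζ Lmax hη hζ L hmeas hbd hindep hmean t0 h0pos t ht
end
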